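/- Let G be a graph with a strong support vertex s (a vertex adjacent to at least two leaves) such that all maximal open packings of G have the same cardinality, and let w be a leaf adjacent to s. Then all maximal open packings of G − w have the same cardinality. -/

import Mathlib

open SimpleGraph

/-- The open neighborhood graph of `G`: distinct vertices are adjacent iff they have a
common neighbor in `G`. -/
def ong {V : Type*} (G : SimpleGraph V) : SimpleGraph V where
  Adj u v := u ≠ v ∧ ∃ w, G.Adj u w ∧ G.Adj v w
  symm := ⟨by rintro u v ⟨h, w, h1, h2⟩; exact ⟨h.symm, w, h2, h1⟩⟩
  loopless := ⟨by rintro u ⟨h, -⟩; exact h rfl⟩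

/-- A set of vertices is an open packing if no two distinct members have a common neighbor. -/
def IsOpenPacking {V : Type*} (G : SimpleGraph V) (P : Set V) : Prop :=
  ∀ ⦃u⦄, u ∈ P → ∀ ⦃v⦄, v ∈ P → u ≠ v → ∀ w, ¬(G.Adj u w ∧ G.Adj v w)

/-- An independent set of vertices. -/
def IsIndep {V : Type*} (G : SimpleGraph V) (s : Set V) : Prop :=
  s.Pairwise fun u v => ¬ G.Adj u v

/-- All maximal open packings of `G` have the same cardinality. -/
def InU {V : Type*} (G : SimpleGraph V) : Prop :=
  ∀ P Q : Set V, Maximal (IsOpenPacking G) P → Maximal (IsOpenPacking G) Q →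
    P.ncard = Q.ncard

/-- All maximal independent sets of `G` have the same cardinality. -/
def WellCovered {V : Type*} (G : SimpleGraph V) : Prop :=
  ∀ P Q : Set V, Maximal (IsIndep G) P → Maximal (IsIndep G) Q → P.ncard = Q.ncard

/-- A leaf is a vertex with exactly one neighbor. -/
def IsLeaf {V : Type*} (G : SimpleGraph V) (v : V) : Prop :=
  ∃ u, G.neighborSet v = {u}

/-- A support vertex is one adjacent to a leaf. -/
def IsSupport {V : Type*} (G : SimpleGraph V) (s : V) : Prop :=
  ∃ l, G.neighborSet l = {s}

/-!
Let `l ≠ w` be a second leaf at `s`. A maximal open packing of `G - w` must contain a neighbor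
of `s`, since otherwise `l` could be added to it. That neighbor and `w` share the neighbor `s`,
so `w` cannot be added either, and the packing is still maximal in `G`. Hence the maximal open
packings of `G - w` are maximal open packings of `G` of the same size.
-/

lemma neighborSet_induce_eq_singleton {V : Type*} {G : SimpleGraph V} {S : Set V} {l t : V}
    (hl : l ∈ S) (ht : t ∈ S) (h : G.neighborSet l = {t}) :
    (G.induce S).neighborSet ⟨l, hl⟩ = {⟨t, ht⟩} := by
  ext x
  rw [mem_neighborSet, induce_adj, ← mem_neighborSet, h, Set.mem_singleton_iff,
    Set.mem_singleton_iff, ← Subtype.coe_inj]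

namespace IsOpenPacking

variable {V : Type*} {G : SimpleGraph V}

lemma mono {P Q : Set V} (hQ : IsOpenPacking G Q) (hPQ : P ⊆ Q) : IsOpenPacking G P :=
  Set.Pairwise.mono hPQ hQ

lemma insert {P : Set V} {x : V} (hP : IsOpenPacking G P)
    (hx : ∀ u ∈ P, u ≠ x → ∀ z, ¬(G.Adj x z ∧ G.Adj u z)) : IsOpenPacking G (insert x P) :=
  Set.Pairwise.insert hP fun u hu hxu =>
    ⟨hx u hu hxu.symm, fun z hz => hx u hu hxu.symm z hz.symm⟩

lemma preimage_val {S Q : Set V} (hQ : IsOpenPacking G Q) :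
    IsOpenPacking (G.induce S) (Subtype.val ⁻¹' Q) :=
  fun _ hu _ hv huv z => hQ hu hv (Subtype.coe_ne_coe.2 huv) z

lemma image_val {S : Set V} (hS : ∀ x ∉ S, (G.neighborSet x).Subsingleton) {P : Set S}
    (hP : IsOpenPacking (G.induce S) P) : IsOpenPacking G (Subtype.val '' P) := by
  rintro _ ⟨u, hu, rfl⟩ _ ⟨v, hv, rfl⟩ huv z ⟨hzu, hzv⟩
  by_cases hz : z ∈ S
  · exact hP hu hv (ne_of_apply_ne _ huv) ⟨z, hz⟩ ⟨hzu, hzv⟩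
  · exact huv (hS z hz hzu.symm hzv.symm)

end IsOpenPacking

section MaximalOpenPacking

variable {V : Type*} {G : SimpleGraph V}

lemma exists_mem_adj_of_maximal_isOpenPacking {P : Set V} {l t : V}
    (hP : Maximal (IsOpenPacking G) P) (hl : G.neighborSet l = {t}) : ∃ u ∈ P, G.Adj u t := by
  have hlt : G.Adj l t := by simp [← mem_neighborSet, hl]
  by_contra! h
  refine h l (hP.mem_of_prop_insert (hP.prop.insert fun u hu _ z ⟨hlz, huz⟩ => ?_)) hlt
  obtain rfl : z = t := by simpa [← mem_neighborSet, hl] using hlz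
  exact h u hu huz

lemma maximal_isOpenPacking_image_val {S : Set V} {P : Set S}
    (hP : Maximal (IsOpenPacking (G.induce S)) P) (himage : IsOpenPacking G (Subtype.val '' P))
    (hout : ∀ x ∉ S, ¬IsOpenPacking G (insert x (Subtype.val '' P))) :
    Maximal (IsOpenPacking G) (Subtype.val '' P) := by
  refine ⟨himage, fun Q hQ hPQ x hx => ?_⟩
  by_cases hxS : x ∈ S
  · have hPQ' : P ⊆ Subtype.val ⁻¹' Q := fun v hv => hPQ ⟨v, hv, rfl⟩
    exact ⟨⟨x, hxS⟩, hP.2 hQ.preimage_val hPQ' hx, rfl⟩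
  · exact absurd (hQ.mono (Set.insert_subset hx hPQ)) (hout x hxS)

lemma maximal_isOpenPacking_image_val_induce_ne {s w l : V}
    (hw : G.neighborSet w = {s}) (hl : G.neighborSet l = {s}) (hlw : l ≠ w)
    {P : Set {v | v ≠ w}} (hP : Maximal (IsOpenPacking (G.induce {v | v ≠ w})) P) :
    Maximal (IsOpenPacking G) (Subtype.val '' P) := by
  have hws : G.Adj w s := by simp [← mem_neighborSet, hw]
  have hsw : s ≠ w := hws.ne.symm
  obtain ⟨u, hu, hus⟩ :=
    exists_mem_adj_of_maximal_isOpenPacking hP (neighborSet_induce_eq_singleton hlw hsw hl)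
  refine maximal_isOpenPacking_image_val hP (hP.prop.image_val ?_) ?_
  · rintro x hx
    obtain rfl : x = w := not_not.1 hx
    simp [hw]
  · rintro x hx hpack
    obtain rfl : x = w := not_not.1 hx
    exact hpack (Set.mem_insert _ _) (Set.mem_insert_of_mem _ ⟨u, hu, rfl⟩) u.2.symm s ⟨hws, hus⟩

end MaximalOpenPacking

theorem stmt10_general {V : Type*} (G : SimpleGraph V) (s w : V)
    (hstrong : ∃ l₁ l₂, l₁ ≠ l₂ ∧ G.neighborSet l₁ = {s} ∧ G.neighborSet l₂ = {s})
    (hw : G.neighborSet w = {s}) (hU : InU G) :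
    InU (G.induce {v | v ≠ w}) := by
  obtain ⟨l, hlw, hl⟩ : ∃ l, l ≠ w ∧ G.neighborSet l = {s} := by
    obtain ⟨l₁, l₂, hne, h₁, h₂⟩ := hstrong
    by_cases h : l₁ = w
    · exact ⟨l₂, h ▸ hne.symm, h₂⟩
    · exact ⟨l₁, h, h₁⟩
  intro P Q hP hQ
  have hPQ := hU _ _ (maximal_isOpenPacking_image_val_induce_ne hw hl hlw hP)
    (maximal_isOpenPacking_image_val_induce_ne hw hl hlw hQ)
  rwa [Set.ncard_image_of_injective _ Subtype.val_injective,
    Set.ncard_image_of_injective _ Subtype.val_injective] at hPQ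

theorem stmt10 {V : Type*} [Fintype V] (G : SimpleGraph V) (s w : V)
    (hstrong : ∃ l₁ l₂, l₁ ≠ l₂ ∧ G.neighborSet l₁ = {s} ∧ G.neighborSet l₂ = {s})
    (hw : G.neighborSet w = {s}) (hU : InU G) :
    InU (G.induce {v | v ≠ w}) :=
  stmt10_general G s w hstrong hw hU
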